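/- Let L = (L₁,…,L₅) ∈ ℝ⁵. Then L satisfies L₁ = L₂ + (2√3 − 3)L₄, L₂ = L₃, L₄ = L₅ and L₂ > L₄ > 0 if and only if there exist real numbers δ, ε with ε > (3 + 2√3)δ > 0 such that L = δ·v_III + ε·v_II. (Equivalence of statements (ii) and (iii) of Lemma 3.) -/

import Mathlib

/-! The vectors `vIII` and `vII` span the plane cut out by the three linear equations of (ii), and
on that plane the coordinates `δ, ε` are read off from `L₂ - L₄ = (8 + 2√3) δ` and
`L₄ = ε - (3 + 2√3) δ`. Under this change of coordinates the inequalities `L₂ > L₄ > 0` become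
`δ > 0` and `ε > (3 + 2√3) δ`. -/

noncomputable def vIII : EuclideanSpace ℝ (Fin 5) :=
  WithLp.toLp 2 ![2, 5, 5, -(3 + 2 * Real.sqrt 3), -(3 + 2 * Real.sqrt 3)]

noncomputable def vII : EuclideanSpace ℝ (Fin 5) :=
  WithLp.toLp 2 ![2 * (Real.sqrt 3 - 1), 1, 1, 1, 1]

open Real

-- The first equation hinges on `(2√3 - 3)(2√3 + 3) = 3`.
theorem eq_smul_vIII_add_smul_vII_iff (L : EuclideanSpace ℝ (Fin 5)) (δ ε : ℝ) :
    L = δ • vIII + ε • vII ↔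
      L 0 = L 1 + (2 * √3 - 3) * L 3 ∧ L 1 = L 2 ∧ L 3 = L 4 ∧
        L 1 - L 3 = (8 + 2 * √3) * δ ∧ L 3 = ε - (3 + 2 * √3) * δ := by
  have hs : √3 ^ 2 = 3 := sq_sqrt (by norm_num)
  simp only [PiLp.ext_iff, Fin.forall_fin_succ, vIII, vII, PiLp.add_apply, PiLp.smul_apply,
    smul_eq_mul, Fin.isValue, Matrix.cons_val_zero, Matrix.cons_val_succ, Fin.succ_zero_eq_one,
    Fin.succ_one_eq_two, Fin.reduceSucc, Matrix.cons_val_fin_one, IsEmpty.forall_iff, and_true]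
  constructor
  · rintro ⟨h0, h1, h2, h3, h4⟩
    exact ⟨by linear_combination h0 - h1 - (2 * √3 - 3) * h3 + 4 * δ * hs, by linarith,
      by linarith, by linarith, by linarith⟩
  · rintro ⟨h01, h12, h34, h13, h3⟩
    exact ⟨by linear_combination h01 + h13 + (2 * √3 - 2) * h3 - 4 * δ * hs, by linarith,
      by linarith, by linarith, by linarith⟩

theorem lemma3_ii_iff_iii (L : EuclideanSpace ℝ (Fin 5)) :
    (L 0 = L 1 + (2 * Real.sqrt 3 - 3) * L 3 ∧ L 1 = L 2 ∧ L 3 = L 4 ∧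
      L 1 > L 3 ∧ L 3 > 0) ↔
    (∃ δ ε : ℝ, ε > (3 + 2 * Real.sqrt 3) * δ ∧ (3 + 2 * Real.sqrt 3) * δ > 0 ∧
      L = δ • vIII + ε • vII) := by
  have h8 : 0 < 8 + 2 * √3 := by positivity
  have h3 : 0 < 3 + 2 * √3 := by positivity
  constructor
  · rintro ⟨h01, h12, h34, h13, hL3⟩
    have hδ : 0 < (L 1 - L 3) / (8 + 2 * √3) := div_pos (sub_pos.2 h13) h8
    refine ⟨_, _, lt_add_of_pos_left _ hL3, mul_pos h3 hδ, ?_⟩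
    exact (eq_smul_vIII_add_smul_vII_iff L _ _).2
      ⟨h01, h12, h34, (mul_div_cancel₀ _ h8.ne').symm, by ring⟩
  · rintro ⟨δ, ε, hε, hδ, hL⟩
    obtain ⟨h01, h12, h34, h13, hL3⟩ := (eq_smul_vIII_add_smul_vII_iff L δ ε).1 hL
    have hδ' : 0 < δ := pos_of_mul_pos_right hδ h3.le
    exact ⟨h01, h12, h34, sub_pos.1 (h13 ▸ mul_pos h8 hδ'), by linarith⟩
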